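/- arXiv:1503.08177 — 2 statements merged into one kernel-verified Lean document; each statement's English description precedes it below -/
import Mathlib

section
/- Let a, b, c be real numbers with a > 0, c > 0, and b ≥ 0, and let β ∈ (0, π/2) satisfy b/a ≤ tan β ≤ c/b (interpreting c/b as +∞ when b = 0). Then the coefficients γ₀ = a - b·cot β, γ₁ = b/(cos β · sin β), and γ₂ = c - b·tan β are all nonnegative, and the matrix identity [[a, b], [b, c]] = γ₀·[[1,0],[0,0]] + γ₁·[[cos²β, cos β sin β],[cos β sin β, sin²β]] + γ₂·[[0,0],[0,1]] holds. -/
open Real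

theorem Matrix.fin_two_symm_eq_directional_split {K : Type*} [Field K] (a b c t s : K)
    (ht : t ≠ 0) (hs : s ≠ 0) :
    (!![a, b; b, c] : Matrix (Fin 2) (Fin 2) K) =
      (a - b * (t / s)) • !![1, 0; 0, 0] +
      (b / (t * s)) • !![t ^ 2, t * s; t * s, s ^ 2] +
      (c - b * (s / t)) • !![0, 0; 0, 1] := by
  ext i j
  fin_cases i <;> fin_cases j <;> simp [field]

theorem sub_mul_inv_nonneg_of_div_le {a b x : ℝ} (ha : 0 < a) (hx : 0 < x) (h : b / a ≤ x) :
    0 ≤ a - b * x⁻¹ := by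
  rw [sub_nonneg, ← div_eq_mul_inv, div_le_iff₀ hx, mul_comm]
  exact (div_le_iff₀ ha).1 h

theorem stmt_0_general (a b c β : ℝ) (ha : 0 < a) (hb : 0 ≤ b)
    (hβ1 : 0 < β) (hβ2 : β < π / 2)
    (h1 : b / a ≤ Real.tan β) (h2 : b * Real.tan β ≤ c) :
    0 ≤ a - b * (Real.cos β / Real.sin β) ∧
    0 ≤ b / (Real.cos β * Real.sin β) ∧
    0 ≤ c - b * Real.tan β ∧
    (!![a, b; b, c] : Matrix (Fin 2) (Fin 2) ℝ) =
      (a - b * (Real.cos β / Real.sin β)) • !![1, 0; 0, 0] +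
      (b / (Real.cos β * Real.sin β)) •
        !![Real.cos β ^ 2, Real.cos β * Real.sin β;
           Real.cos β * Real.sin β, Real.sin β ^ 2] +
      (c - b * Real.tan β) • !![0, 0; 0, 1] := by
  have hcos : 0 < cos β := cos_pos_of_mem_Ioo ⟨by linarith [pi_pos], hβ2⟩
  have hsin : 0 < sin β := sin_pos_of_pos_of_lt_pi hβ1 (by linarith [pi_pos])
  have hcot : cos β / sin β = (tan β)⁻¹ := by rw [tan_eq_sin_div_cos, inv_div]
  refine ⟨?_, by positivity, sub_nonneg.2 h2, ?_⟩
  · rw [hcot]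
    exact sub_mul_inv_nonneg_of_div_le ha (tan_pos_of_pos_of_lt_pi_div_two hβ1 hβ2) h1
  · rw [tan_eq_sin_div_cos]
    exact Matrix.fin_two_symm_eq_directional_split a b c _ _ hcos.ne' hsin.ne'

theorem stmt_0 (a b c β : ℝ) (ha : 0 < a) (hc : 0 < c) (hb : 0 ≤ b)
    (hβ1 : 0 < β) (hβ2 : β < π / 2)
    (h1 : b / a ≤ Real.tan β) (h2 : b * Real.tan β ≤ c) :
    0 ≤ a - b * (Real.cos β / Real.sin β) ∧
    0 ≤ b / (Real.cos β * Real.sin β) ∧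
    0 ≤ c - b * Real.tan β ∧
    (!![a, b; b, c] : Matrix (Fin 2) (Fin 2) ℝ) =
      (a - b * (Real.cos β / Real.sin β)) • !![1, 0; 0, 0] +
      (b / (Real.cos β * Real.sin β)) •
        !![Real.cos β ^ 2, Real.cos β * Real.sin β;
           Real.cos β * Real.sin β, Real.sin β ^ 2] +
      (c - b * Real.tan β) • !![0, 0; 0, 1] :=
  stmt_0_general a b c β ha hb hβ1 hβ2 h1 h2
end

section
/- Let a, b, c, γ₀, γ₁, γ₂ : ℝ² → ℝ be C¹ functions and β ∈ ℝ such that at every point [[a,b],[b,c]] = γ₀[[1,0],[0,0]] + γ₁ P_β + γ₂[[0,0],[0,1]], where P_β = [[cos²β, cos β sin β],[cos β sin β, sin²β]]. Then for every C² function u, ∇·([[a,b],[b,c]]∇u) = ∂x(γ₀ ∂x u) + ∂_β(γ₁ ∂_β u) + ∂y(γ₂ ∂y u) pointwise. -/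
noncomputable def px (f : ℝ × ℝ → ℝ) : ℝ × ℝ → ℝ := fun p => fderiv ℝ f p (1, 0)
noncomputable def py (f : ℝ × ℝ → ℝ) : ℝ × ℝ → ℝ := fun p => fderiv ℝ f p (0, 1)
noncomputable def pdir (β : ℝ) (f : ℝ × ℝ → ℝ) : ℝ × ℝ → ℝ :=
  fun p => Real.cos β * px f p + Real.sin β * py f p

/-! Writing `F = γ₁ ∂_β u`, the splitting makes the two flux components `γ₀ ∂ₓu + cos β F` and
`sin β F + γ₂ ∂ᵧu`; differentiating them by linearity of `∂ₓ`, `∂ᵧ` gives the right-hand side,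
since `∂_β F = cos β ∂ₓF + sin β ∂ᵧF`. -/

section PartialDerivatives

variable {f g : ℝ × ℝ → ℝ} {p : ℝ × ℝ}

lemma px_add (hf : DifferentiableAt ℝ f p) (hg : DifferentiableAt ℝ g p) :
    px (fun q => f q + g q) p = px f p + px g p := by
  simp [px, fderiv_fun_add hf hg]

lemma py_add (hf : DifferentiableAt ℝ f p) (hg : DifferentiableAt ℝ g p) :
    py (fun q => f q + g q) p = py f p + py g p := by
  simp [py, fderiv_fun_add hf hg]

lemma px_const_mul (r : ℝ) (hf : DifferentiableAt ℝ f p) :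
    px (fun q => r * f q) p = r * px f p := by
  simp [px, fderiv_const_mul hf]

lemma py_const_mul (r : ℝ) (hf : DifferentiableAt ℝ f p) :
    py (fun q => r * f q) p = r * py f p := by
  simp [py, fderiv_const_mul hf]

lemma ContDiff.px {m n : WithTop ℕ∞} (hf : ContDiff ℝ n f) (hmn : m + 1 ≤ n) :
    ContDiff ℝ m (px f) :=
  (hf.fderiv_right hmn).clm_apply contDiff_const

lemma ContDiff.py {m n : WithTop ℕ∞} (hf : ContDiff ℝ n f) (hmn : m + 1 ≤ n) :
    ContDiff ℝ m (py f) :=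
  (hf.fderiv_right hmn).clm_apply contDiff_const

lemma ContDiff.pdir {m n : WithTop ℕ∞} (β : ℝ) (hf : ContDiff ℝ n f) (hmn : m + 1 ≤ n) :
    ContDiff ℝ m (pdir β f) :=
  (contDiff_const.mul (hf.px hmn)).add (contDiff_const.mul (hf.py hmn))

end PartialDerivatives

lemma entries_eq_of_eq_splitting {R : Type*} [CommRing R] {a b c g₀ g₁ g₂ s t : R}
    (h : !![a, b; b, c] =
      g₀ • !![1, 0; 0, 0] + g₁ • !![s ^ 2, s * t; s * t, t ^ 2] + g₂ • !![0, 0; 0, 1]) :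
    a = g₀ + g₁ * s ^ 2 ∧ b = g₁ * (s * t) ∧ c = g₁ * t ^ 2 + g₂ := by
  refine ⟨?_, ?_, ?_⟩
  · simpa using congrFun (congrFun h 0) 0
  · simpa using congrFun (congrFun h 0) 1
  · simpa using congrFun (congrFun h 1) 1

theorem stmt_17_general (a b c γ₀ γ₁ γ₂ : ℝ × ℝ → ℝ)
    (h0 : ContDiff ℝ 1 γ₀) (h1 : ContDiff ℝ 1 γ₁) (h2 : ContDiff ℝ 1 γ₂)
    (β : ℝ)
    (hsplit : ∀ p : ℝ × ℝ,
      (!![a p, b p; b p, c p] : Matrix (Fin 2) (Fin 2) ℝ) =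
        γ₀ p • !![1, 0; 0, 0] +
        γ₁ p • !![Real.cos β ^ 2, Real.cos β * Real.sin β;
                  Real.cos β * Real.sin β, Real.sin β ^ 2] +
        γ₂ p • !![0, 0; 0, 1]) :
    ∀ u : ℝ × ℝ → ℝ, ContDiff ℝ 2 u → ∀ p : ℝ × ℝ,
      px (fun q => a q * px u q + b q * py u q) p +
      py (fun q => b q * px u q + c q * py u q) p =
        px (fun q => γ₀ q * px u q) p +
        pdir β (fun q => γ₁ q * pdir β u q) p +
        py (fun q => γ₂ q * py u q) p := by
  intro u hu p
  have hle : (1 : WithTop ℕ∞) + 1 ≤ 2 := by norm_num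
  have d₀ := ((h0.mul (hu.px hle)).differentiable one_ne_zero) p
  have d₁ := ((h1.mul (hu.pdir β hle)).differentiable one_ne_zero) p
  have d₂ := ((h2.mul (hu.py hle)).differentiable one_ne_zero) p
  have hflux_x : (fun q => a q * px u q + b q * py u q) =
      fun q => γ₀ q * px u q + Real.cos β * (γ₁ q * pdir β u q) := by
    funext q
    obtain ⟨ha, hb, -⟩ := entries_eq_of_eq_splitting (hsplit q)
    rw [ha, hb, pdir]; ring
  have hflux_y : (fun q => b q * px u q + c q * py u q) =
      fun q => Real.sin β * (γ₁ q * pdir β u q) + γ₂ q * py u q := by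
    funext q
    obtain ⟨-, hb, hc⟩ := entries_eq_of_eq_splitting (hsplit q)
    rw [hb, hc, pdir]; ring
  rw [hflux_x, hflux_y, px_add d₀ (d₁.const_mul _), py_add (d₁.const_mul _) d₂,
    px_const_mul _ d₁, py_const_mul _ d₁, pdir]
  ring

theorem stmt_17 (a b c γ₀ γ₁ γ₂ : ℝ × ℝ → ℝ)
    (ha : ContDiff ℝ 1 a) (hb : ContDiff ℝ 1 b) (hc : ContDiff ℝ 1 c)
    (h0 : ContDiff ℝ 1 γ₀) (h1 : ContDiff ℝ 1 γ₁) (h2 : ContDiff ℝ 1 γ₂)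
    (β : ℝ)
    (hsplit : ∀ p : ℝ × ℝ,
      (!![a p, b p; b p, c p] : Matrix (Fin 2) (Fin 2) ℝ) =
        γ₀ p • !![1, 0; 0, 0] +
        γ₁ p • !![Real.cos β ^ 2, Real.cos β * Real.sin β;
                  Real.cos β * Real.sin β, Real.sin β ^ 2] +
        γ₂ p • !![0, 0; 0, 1]) :
    ∀ u : ℝ × ℝ → ℝ, ContDiff ℝ 2 u → ∀ p : ℝ × ℝ,
      px (fun q => a q * px u q + b q * py u q) p +
      py (fun q => b q * px u q + c q * py u q) p =
        px (fun q => γ₀ q * px u q) p +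
        pdir β (fun q => γ₁ q * pdir β u q) p +
        py (fun q => γ₂ q * py u q) p :=
  stmt_17_general a b c γ₀ γ₁ γ₂ h0 h1 h2 β hsplit
end
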